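/- Let I ⊆ R be a homogeneous ideal, A = R/I with Hilbert function H(A,t) = dim_k A_t, and let d ≥ 1 be an integer such that H(A,j+1) = H(A,j)^⟨j⟩ for all j ≥ d. Write the d-binomial expansion as H(A,d) = Σ_{i=δ}^{d} C(a_i+i,i) with a_d ≥ a_{d−1} ≥ ··· ≥ a_δ ≥ 0. Then H(A,t) = Σ_{i=δ}^{d} C(t + a_i − (d−i), a_i) for every t ≥ d; in particular the Hilbert polynomial of A is P_A(z) = Σ_{i=δ}^{d} C(z + a_i − (d−i), a_i). -/

import Mathlib

open MvPolynomial

/-! ### Combinatorics of binomial expansions -/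

/-- The largest `m` with `C(m,d) ≤ c` (for `c,d ≥ 1`); the leading term `k_d`
of the `d`-binomial expansion of `c`. -/
def maxBinom (c d : ℕ) : ℕ := Nat.findGreatest (fun m => Nat.choose m d ≤ c) (c + d)

lemma one_le_choose_maxBinom {c d : ℕ} (hc : c ≠ 0) (hd : d ≠ 0) :
    1 ≤ Nat.choose (maxBinom c d) d := by
  have h : d ≤ maxBinom c d :=
    Nat.le_findGreatest (Nat.le_add_left d c)
      (by simpa [Nat.choose_self] using Nat.one_le_iff_ne_zero.mpr hc)
  exact Nat.choose_pos h

/-- Macaulay's function `c ↦ c^⟨d⟩`: if `c = C(k_d,d) + C(k_{d-1},d-1) + ⋯ + C(k_δ,δ)`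
is the `d`-binomial expansion of `c`, then
`macaulayFun c d = C(k_d+1,d+1) + ⋯ + C(k_δ+1,δ+1)`; and `0^⟨d⟩ = c^⟨0⟩ = 0`. -/
def macaulayFun (c d : ℕ) : ℕ :=
  if h : c = 0 ∨ d = 0 then 0
  else
    Nat.choose (maxBinom c d + 1) (d + 1) +
      macaulayFun (c - Nat.choose (maxBinom c d) d) (d - 1)
termination_by c
decreasing_by
  push_neg at h
  have h1 := one_le_choose_maxBinom h.1 h.2
  have h2 := Nat.pos_of_ne_zero h.1
  omega

/-- Green's function `c ↦ c_⟨d⟩`: if `c = C(k_d,d) + C(k_{d-1},d-1) + ⋯ + C(k_δ,δ)`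
is the `d`-binomial expansion of `c`, then
`greenFun c d = C(k_d-1,d) + ⋯ + C(k_δ-1,δ)` (with `C(i,j) = 0` for `i < j`);
and `0_⟨d⟩ = c_⟨0⟩ = 0`. -/
def greenFun (c d : ℕ) : ℕ :=
  if h : c = 0 ∨ d = 0 then 0
  else
    Nat.choose (maxBinom c d - 1) d +
      greenFun (c - Nat.choose (maxBinom c d) d) (d - 1)
termination_by c
decreasing_by
  push_neg at h
  have h1 := one_le_choose_maxBinom h.1 h.2
  have h2 := Nat.pos_of_ne_zero h.1
  omega

/-- The list `[k_d, k_{d-1}, …, k_δ]` of the `d`-binomial expansion of `c`. -/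
def binExpand (c d : ℕ) : List ℕ :=
  if h : c = 0 ∨ d = 0 then []
  else maxBinom c d :: binExpand (c - Nat.choose (maxBinom c d) d) (d - 1)
termination_by c
decreasing_by
  push_neg at h
  have h1 := one_le_choose_maxBinom h.1 h.2
  have h2 := Nat.pos_of_ne_zero h.1
  omega

/-- The Macaulay difference list `(a_d, a_{d-1}, …, a_δ)` of `c` in degree `d`,
where `a_i = k_i - i` for the `d`-binomial expansion `c = Σ C(k_i, i)`. -/
def diffList (c d : ℕ) : List ℕ :=
  List.zipWith (fun m i => m - i) (binExpand c d) ((List.range (d + 1)).reverse)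

/-- `gotzmannCoeffAux c d ℓ` is the number of entries of the Macaulay difference list
of `c` in degree `d` which are equal to `ℓ`; for `c = H_X(d)` this is `C_ℓ(X,d)`. -/
def gotzmannCoeffAux (c d ℓ : ℕ) : ℕ := (diffList c d).count ℓ

/-! ### Hilbert functions of subschemes of projective space -/

/-- The homogeneous coordinate ring `R = k[x_0,…,x_n]` of `ℙⁿ`. -/
abbrev PR (k : Type) [Field k] (n : ℕ) := MvPolynomial (Fin (n + 1)) k

/-- The degree-`d` graded component of an ideal `I ⊆ k[x_0,…,x_n]`,
as a `k`-subspace of the polynomial ring. -/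
noncomputable def idealComp {k : Type} [Field k] {n : ℕ} (I : Ideal (PR k n)) (d : ℕ) :
    Submodule k (PR k n) :=
  Submodule.restrictScalars k I ⊓ homogeneousSubmodule (Fin (n + 1)) k d

/-- The Hilbert function of `R/I`: `hilb I d = dim_k R_d - dim_k I_d`. -/
noncomputable def hilb {k : Type} [Field k] {n : ℕ} (I : Ideal (PR k n)) (d : ℕ) : ℕ :=
  Module.finrank k (homogeneousSubmodule (Fin (n + 1)) k d) -
    Module.finrank k (idealComp I d)

/-- First difference `ΔH(d) = H(d) - H(d-1)` of the Hilbert function of `R/I`. -/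
noncomputable def deltaH {k : Type} [Field k] {n : ℕ} (I : Ideal (PR k n)) (d : ℕ) : ℕ :=
  hilb I d - hilb I (d - 1)

/-- An ideal is homogeneous if it contains all homogeneous components of its elements. -/
def IsHomog {k : Type} [Field k] {n : ℕ} (I : Ideal (PR k n)) : Prop :=
  ∀ f ∈ I, ∀ d : ℕ, MvPolynomial.homogeneousComponent d f ∈ I

/-- The irrelevant maximal ideal `(x_0, …, x_n)`. -/
noncomputable def irrel (k : Type) [Field k] (n : ℕ) : Ideal (PR k n) :=
  Ideal.span (Set.range MvPolynomial.X)

/-- The saturation `I^sat = ⋃_m (I : (x_0,…,x_n)^m)` of an ideal `I`. -/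
noncomputable def satur {k : Type} [Field k] {n : ℕ} (I : Ideal (PR k n)) : Ideal (PR k n) :=
  ⨆ m : ℕ, Submodule.colon I ((irrel k n ^ m : Ideal (PR k n)) : Set (PR k n))

/-- The saturation degree `sat(I)`: the least `r` with `I_j = (I^sat)_j` for all `j ≥ r`. -/
noncomputable def satDeg {k : Type} [Field k] {n : ℕ} (I : Ideal (PR k n)) : ℕ :=
  sInf {r : ℕ | ∀ j ≥ r, idealComp I j = idealComp (satur I) j}

/-- The Gotzmann number (persistence index) `G`: the least `d ≥ 1` such that the Hilbert
function of `R/I` has maximal growth `H(t+1) = H(t)^⟨t⟩` in every degree `t ≥ d`. -/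
noncomputable def Gnum {k : Type} [Field k] {n : ℕ} (I : Ideal (PR k n)) : ℕ :=
  sInf {d : ℕ | 1 ≤ d ∧ ∀ t ≥ d, hilb I (t + 1) = macaulayFun (hilb I t) t}

/-- The invariant `M`: the least `d ≥ 1` such that equality `ΔH(t) = H(t)_⟨t⟩`
in Green's Hyperplane Restriction Theorem holds for every degree `t ≥ d`. -/
noncomputable def Mnum {k : Type} [Field k] {n : ℕ} (I : Ideal (PR k n)) : ℕ :=
  sInf {d : ℕ | 1 ≤ d ∧ ∀ t ≥ d, deltaH I t = greenFun (hilb I t) t}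

/-- The `ℓ`-th Gotzmann coefficient `C_ℓ(X)` of the subscheme defined by `I`: the number of
entries equal to `ℓ` in the (stable) Macaulay difference list of `H_X(d)`, `d ≥ G(X)`. -/
noncomputable def gotzmannCoeff {k : Type} [Field k] {n : ℕ} (I : Ideal (PR k n)) (ℓ : ℕ) : ℕ :=
  gotzmannCoeffAux (hilb I (Gnum I + 1)) (Gnum I + 1) ℓ

/-- `X` is a hypersurface in a linear subspace of `ℙⁿ`:
`I_X = (L_1,…,L_c,F)` for linearly independent linear forms `L_i` and a form `F` of
positive degree which is a nonzerodivisor modulo `(L_1,…,L_c)`. -/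
def IsHypersurfaceInLinearSubspace {k : Type} [Field k] {n : ℕ} (I : Ideal (PR k n)) : Prop :=
  ∃ (c : ℕ) (L : Fin c → PR k n) (F : PR k n) (e : ℕ),
    (∀ i, (L i).IsHomogeneous 1) ∧ LinearIndependent k L ∧
    0 < e ∧ F.IsHomogeneous e ∧
    (∀ g : PR k n, F * g ∈ Ideal.span (Set.range L) → g ∈ Ideal.span (Set.range L)) ∧
    I = Ideal.span (Set.range L ∪ {F})

/-- Equidimensionality: all minimal primes of `I` have quotient of the same Krull dimension. -/
def IsEquidim {k : Type} [Field k] {n : ℕ} (I : Ideal (PR k n)) : Prop :=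
  ∀ p ∈ I.minimalPrimes, ∀ q ∈ I.minimalPrimes,
    ringKrullDim (PR k n ⧸ p) = ringKrullDim (PR k n ⧸ q)

/-- The (affine cone) vanishing ideal of a subset of `k^{n+1}`. -/
def vanishIdeal {k : Type} [Field k] {n : ℕ} (S : Set (Fin (n + 1) → k)) : Ideal (PR k n) where
  carrier := {f | ∀ x ∈ S, MvPolynomial.eval x f = 0}
  add_mem' := by
    intro f g hf hg x hx
    simp [map_add, hf x hx, hg x hx]
  zero_mem' := by intro x hx; simp
  smul_mem' := by
    intro c f hf x hx
    simp [smul_eq_mul, hf x hx]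

/-- The affine cone over the (finite) set of points of `ℙⁿ` with homogeneous
coordinate vectors `v j`. -/
def coneOver {k : Type} [Field k] {n : ℕ} {s : ℕ} (v : Fin s → (Fin (n + 1) → k))
    (T : Set (Fin s)) : Set (Fin (n + 1) → k) :=
  {x | ∃ j ∈ T, ∃ t : k, x = t • v j}

/-- The linear form with coefficient vector `v`. -/
noncomputable def linForm {k : Type} [Field k] {n : ℕ} (v : Fin (n + 1) → k) : PR k n :=
  ∑ j, MvPolynomial.C (v j) * MvPolynomial.X j

/-- `GenericProp k n ℓ Q` : the property `Q` holds for all tuples of `ℓ` (coefficient vectors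
of) linear forms in a suitable nonempty Zariski-open subset of `(R_1)^ℓ`, i.e. on a nonempty
basic open set: the nonvanishing locus of a nonzero polynomial in the coefficients. -/
def GenericProp (k : Type) [Field k] (n ℓ : ℕ) (Q : (Fin ℓ → Fin (n + 1) → k) → Prop) : Prop :=
  ∃ F : MvPolynomial (Fin ℓ × Fin (n + 1)) k, F ≠ 0 ∧
    ∀ M : Fin ℓ → Fin (n + 1) → k, MvPolynomial.eval (fun p => M p.1 p.2) F ≠ 0 → Q M

/-- Castelnuovo–Mumford regularity bound `reg(I) ≤ m`, via the Bayer–Stillman criterion: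
there are linear forms `h_1, …, h_j` such that
`((I + (h_1,…,h_{i-1})) : h_i)_t = (I + (h_1,…,h_{i-1}))_t` for all `t ≥ m` and all `i`, and
`(I + (h_1,…,h_j))_t = R_t` for all `t ≥ m`. -/
def RegLE {k : Type} [Field k] {n : ℕ} (I : Ideal (PR k n)) (m : ℕ) : Prop :=
  ∃ (j : ℕ) (h : Fin j → PR k n),
    (∀ i, (h i).IsHomogeneous 1) ∧
    (∀ i : Fin j, ∀ t, m ≤ t →
      idealComp (Submodule.colon (I ⊔ Ideal.span (h '' {i' | i' < i})) (Ideal.span {h i})) t =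
        idealComp (I ⊔ Ideal.span (h '' {i' | i' < i})) t) ∧
    (∀ t, m ≤ t →
      idealComp (I ⊔ Ideal.span (Set.range h)) t = homogeneousSubmodule (Fin (n + 1)) k t)

/-! If `c = Σ_{i=δ}^{d} C(k_i, i)` with `i ≤ k_i` and `k_δ < ⋯ < k_d`, the lower terms sum to
less than `C(k_d, d-1)`, so `C(k_d, d)` is the largest `C(m, d) ≤ c` and Macaulay's recursion
peels the expansion off term by term: `c^⟨d⟩ = Σ C(k_i+1, i+1)`. Under maximal growth the
expansion of `H(d+s)` is thus that of `H(d)` with every `k_i` and every `i` raised by `s`, i.e.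
`H(d+s) = Σ C(a_i+i+s, i+s)`, which is the claimed formula by `C(a+b, b) = C(a+b, a)`. -/

open Finset

theorem maxBinom_eq {c m d : ℕ} (hdm : d ≤ m) (hle : m.choose d ≤ c)
    (hlt : c < (m + 1).choose d) : maxBinom c d = m := by
  rcases Nat.eq_zero_or_pos d with rfl | hd
  · simp only [Nat.choose_zero_right] at hle hlt; omega
  have hm : m - d + 1 ≤ m.choose d :=
    calc m - d + 1 = (m - d + 1).choose (m - d) := (Nat.choose_succ_self_right _).symm
    _ ≤ m.choose (m - d) := Nat.choose_le_choose _ (by omega)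
    _ = m.choose d := Nat.choose_symm hdm
  rw [maxBinom, Nat.findGreatest_eq_iff]
  exact ⟨by omega, fun _ => hle,
    fun _ hn _ h => absurd h (not_le.mpr (hlt.trans_le (Nat.choose_le_choose _ hn)))⟩

theorem macaulayFun_zero_left (d : ℕ) : macaulayFun 0 d = 0 := by
  rw [macaulayFun, dif_pos (Or.inl rfl)]

theorem macaulayFun_choose_add {m d c : ℕ} (hdm : d + 1 ≤ m) (hc : c < m.choose d) :
    macaulayFun (m.choose (d + 1) + c) (d + 1) = (m + 1).choose (d + 2) + macaulayFun c d := by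
  have hpos : 0 < m.choose (d + 1) := Nat.choose_pos hdm
  have hmax : maxBinom (m.choose (d + 1) + c) (d + 1) = m :=
    maxBinom_eq hdm (Nat.le_add_right _ _) (by rw [Nat.choose_succ_succ']; omega)
  rw [macaulayFun, dif_neg (by omega), hmax, Nat.add_sub_cancel_left, Nat.add_sub_cancel]

theorem apply_lt_of_strictMonoOn_Icc_succ {δ d : ℕ} {k : ℕ → ℕ}
    (hk : StrictMonoOn k (Set.Icc δ (d + 1))) : ∀ i ∈ Icc δ d, k i < k (d + 1) := by
  intro i hi
  rw [mem_Icc] at hi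
  exact hk ⟨hi.1, by omega⟩ ⟨by omega, le_rfl⟩ (by omega)

theorem sum_choose_lt_choose {δ d m : ℕ} {k : ℕ → ℕ} (hδ : 1 ≤ δ)
    (hk : StrictMonoOn k (Set.Icc δ d)) (hk_ge : ∀ i ∈ Icc δ d, i ≤ k i)
    (hkm : ∀ i ∈ Icc δ d, k i < m) (hdm : d ≤ m) :
    ∑ i ∈ Icc δ d, (k i).choose i < m.choose d := by
  induction d generalizing m with
  | zero => simp [Icc_eq_empty_of_lt (show 0 < δ from hδ)]
  | succ d ih =>
    by_cases hδd : δ ≤ d + 1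
    · have htop : d + 1 ∈ Icc δ (d + 1) := mem_Icc.mpr ⟨hδd, le_rfl⟩
      have hsub : Icc δ d ⊆ Icc δ (d + 1) := Icc_subset_Icc_right d.le_succ
      have hrest : ∑ i ∈ Icc δ d, (k i).choose i < (k (d + 1)).choose d :=
        ih (hk.mono (Set.Icc_subset_Icc_right d.le_succ)) (fun i hi => hk_ge i (hsub hi))
          (apply_lt_of_strictMonoOn_Icc_succ hk)
          (by have := hk_ge _ htop; omega)
      calc ∑ i ∈ Icc δ (d + 1), (k i).choose i
          = ∑ i ∈ Icc δ d, (k i).choose i + (k (d + 1)).choose (d + 1) :=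
            sum_Icc_succ_top hδd _
        _ < (k (d + 1)).choose d + (k (d + 1)).choose (d + 1) := by omega
        _ = (k (d + 1) + 1).choose (d + 1) := (Nat.choose_succ_succ' _ _).symm
        _ ≤ m.choose (d + 1) := Nat.choose_le_choose _ (hkm _ htop)
    · simpa [Icc_eq_empty (show ¬δ ≤ d + 1 from hδd)] using Nat.choose_pos hdm

theorem macaulayFun_sum_choose {δ d : ℕ} {k : ℕ → ℕ} (hδ : 1 ≤ δ)
    (hk : StrictMonoOn k (Set.Icc δ d)) (hk_ge : ∀ i ∈ Icc δ d, i ≤ k i) :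
    macaulayFun (∑ i ∈ Icc δ d, (k i).choose i) d =
      ∑ i ∈ Icc δ d, (k i + 1).choose (i + 1) := by
  induction d with
  | zero => simp [Icc_eq_empty_of_lt (show 0 < δ from hδ), macaulayFun_zero_left]
  | succ d ih =>
    by_cases hδd : δ ≤ d + 1
    · have htop : d + 1 ∈ Icc δ (d + 1) := mem_Icc.mpr ⟨hδd, le_rfl⟩
      have hsub : Icc δ d ⊆ Icc δ (d + 1) := Icc_subset_Icc_right d.le_succ
      have hk' : StrictMonoOn k (Set.Icc δ d) := hk.mono (Set.Icc_subset_Icc_right d.le_succ)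
      have hrest : ∑ i ∈ Icc δ d, (k i).choose i < (k (d + 1)).choose d :=
        sum_choose_lt_choose hδ hk' (fun i hi => hk_ge i (hsub hi))
          (apply_lt_of_strictMonoOn_Icc_succ hk)
          (by have := hk_ge _ htop; omega)
      rw [sum_Icc_succ_top hδd, sum_Icc_succ_top hδd, add_comm,
        macaulayFun_choose_add (hk_ge _ htop) hrest, ih hk' fun i hi => hk_ge i (hsub hi),
        add_comm]
    · simp [Icc_eq_empty (show ¬δ ≤ d + 1 from hδd), macaulayFun_zero_left]

theorem eq_sum_choose_of_macaulayFun_growth {H a : ℕ → ℕ} {δ d : ℕ} (hδ : 1 ≤ δ)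
    (hmax : ∀ j, d ≤ j → H (j + 1) = macaulayFun (H j) j)
    (hmono : MonotoneOn a (Set.Icc δ d))
    (hexp : H d = ∑ i ∈ Icc δ d, (a i + i).choose i) (s : ℕ) :
    H (d + s) = ∑ i ∈ Icc δ d, (a i + i + s).choose (i + s) := by
  induction s with
  | zero => exact hexp
  | succ s ih =>
    have hshift (f : ℕ → ℕ) :
        ∑ i ∈ Icc δ d, f (i + s) = ∑ j ∈ Icc (δ + s) (d + s), f j := by
      rw [← map_add_right_Icc, sum_map]
      rfl
    set k : ℕ → ℕ := fun j => a (j - s) + j with hk_def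
    have hk_shift (i : ℕ) : k (i + s) = a i + i + s := by
      simp only [hk_def, Nat.add_sub_cancel]
      omega
    have hk_mono : StrictMonoOn k (Set.Icc (δ + s) (d + s)) := by
      intro x hx y hy hxy
      simp only [Set.mem_Icc] at hx hy
      have : a (x - s) ≤ a (y - s) :=
        hmono (show x - s ∈ Set.Icc δ d from ⟨by omega, by omega⟩)
          (show y - s ∈ Set.Icc δ d from ⟨by omega, by omega⟩) (by omega)
      simp only [hk_def]
      omega
    calc H (d + (s + 1)) = macaulayFun (H (d + s)) (d + s) := hmax _ (Nat.le_add_right d s)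
      _ = macaulayFun (∑ j ∈ Icc (δ + s) (d + s), (k j).choose j) (d + s) := by
        simp only [ih, ← hshift, hk_shift]
      _ = ∑ j ∈ Icc (δ + s) (d + s), (k j + 1).choose (j + 1) :=
        macaulayFun_sum_choose (by omega) hk_mono (fun j _ => by simp only [hk_def]; omega)
      _ = ∑ i ∈ Icc δ d, (a i + i + (s + 1)).choose (i + (s + 1)) := by
        simp only [← hshift, hk_shift]
        rfl

theorem hilb_eq_of_maximal_growth_general {k : Type} [Field k] {n : ℕ}
    (I : Ideal (PR k n))
    (d δ : ℕ) (hδ1 : 1 ≤ δ)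
    (hmax : ∀ j, d ≤ j → hilb I (j + 1) = macaulayFun (hilb I j) j)
    (a : ℕ → ℕ) (hmono : MonotoneOn a (Set.Icc δ d))
    (hexp : hilb I d = ∑ i ∈ Finset.Icc δ d, Nat.choose (a i + i) i) :
    ∀ t, d ≤ t →
      hilb I t = ∑ i ∈ Finset.Icc δ d, Nat.choose (t + a i - (d - i)) (a i) := by
  intro t hdt
  obtain ⟨s, rfl⟩ := Nat.exists_eq_add_of_le hdt
  rw [eq_sum_choose_of_macaulayFun_growth hδ1 hmax hmono hexp s]
  refine sum_congr rfl fun i hi => ?_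
  have hid : i ≤ d := (mem_Icc.mp hi).2
  rw [show d + s + a i - (d - i) = a i + (i + s) by omega, Nat.choose_symm_add, add_assoc]

/-- Let `I ⊆ R` be a homogeneous ideal, `A = R/I`, and `d ≥ 1` with
`H(A,j+1) = H(A,j)^⟨j⟩` for all `j ≥ d`. Writing the `d`-binomial expansion
`H(A,d) = Σ_{i=δ}^d C(a_i+i,i)` with `a_d ≥ ⋯ ≥ a_δ ≥ 0`, one has
`H(A,t) = Σ_{i=δ}^d C(t + a_i − (d−i), a_i)` for every `t ≥ d`; in particular the
Hilbert polynomial of `A` is `P_A(z) = Σ_{i=δ}^d C(z + a_i − (d−i), a_i)`. -/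
theorem hilb_eq_of_maximal_growth {k : Type} [Field k] {n : ℕ}
    (I : Ideal (PR k n)) (hhom : IsHomog I)
    (d δ : ℕ) (hd : 1 ≤ d) (hδ1 : 1 ≤ δ) (hδd : δ ≤ d)
    (hmax : ∀ j, d ≤ j → hilb I (j + 1) = macaulayFun (hilb I j) j)
    (a : ℕ → ℕ) (hmono : MonotoneOn a (Set.Icc δ d))
    (hexp : hilb I d = ∑ i ∈ Finset.Icc δ d, Nat.choose (a i + i) i) :
    ∀ t, d ≤ t →
      hilb I t = ∑ i ∈ Finset.Icc δ d, Nat.choose (t + a i - (d - i)) (a i) :=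
  hilb_eq_of_maximal_growth_general I d δ hδ1 hmax a hmono hexp
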